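/- arXiv:2009.10683 — 2 statements merged into one kernel-verified Lean document; each statement's English description precedes it below -/
import Mathlib

section
/- For all z in the closed unit disk of the complex plane, |κ₁(z)| ≤ 1, with equality if and only if z = 1, where κ₁ is the degree-1 arc-cosine kernel function extended analytically from its Taylor series. -/
/-!
The Maclaurin coefficients cₙ of κ₁ are nonnegative, so on the closed disk
|κ₁(z)| ≤ ∑ cₙ |z|ⁿ ≤ ∑ cₙ, and equality forces every term with cₙ > 0 to point in the
direction of κ₁(z); as c₀ > 0 and c₁ > 0 this gives z = 1. It remains to show ∑ cₙ = 1.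
Writing c₂ₖ₊₂ = bₖ / ((2k + 1) π), where ∑ bₖ yᵏ = (1 - √(1 - y)) / y = 1 / (1 + √(1 - y))
by the binomial series, term-by-term integration over y = t², t ∈ [0, 1], gives
∑ₖ c₂ₖ₊₂ = (1/π) ∫₀¹ dt / (1 + √(1 - t²)) = (π/2 - 1)/π, and c₀ + c₁ = 1/π + 1/2.
-/

open Real Complex

/-- Maclaurin coefficients of the degree-1 arc-cosine kernel κ₁. -/
noncomputable def k1Coeff : ℕ → ℝ := fun m =>
  if m = 0 then 1 / Real.pi
  else if m = 1 then 1 / 2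
  else if m % 2 = 0 then
    (Nat.doubleFactorial (m - 3) : ℝ) /
      ((m - 1 : ℝ) * (Nat.factorial (m / 2)) * 2 ^ (m / 2) * Real.pi)
  else 0

/-- κ₁ on the closed unit disk, defined by its Maclaurin series. -/
noncomputable def k1Series (z : ℂ) : ℂ := ∑' n : ℕ, (k1Coeff n : ℂ) * z ^ n

open scoped Nat ComplexConjugate

theorem Ring.choose_add_one_mul {R : Type*} [Field R] [CharZero R] (a : R) (n : ℕ) :
    Ring.choose a (n + 1) * (n + 1) = Ring.choose a n * (a - n) := by
  simp only [Ring.choose_eq_smul, descPochhammer_succ_right, Polynomial.smeval_mul,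
    Polynomial.smeval_sub, Polynomial.smeval_X, Polynomial.smeval_natCast, Nat.factorial_succ,
    smul_eq_mul, Nat.cast_mul]
  field_simp
  push_cast
  ring

namespace Complex

lemma eq_one_of_norm_le_one_of_re_eq_one {w : ℂ} (hw : ‖w‖ ≤ 1) (hre : w.re = 1) : w = 1 :=
  ext hre <| abs_re_eq_norm.mp <| le_antisymm (abs_re_le_norm w) (by rw [hre]; simpa)

variable {a : ℕ → ℝ} {s : ℝ} {z : ℂ}

lemma norm_ofReal_mul_pow_le {c : ℝ} (hc : 0 ≤ c) (hz : ‖z‖ ≤ 1) (n : ℕ) :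
    ‖(c : ℂ) * z ^ n‖ ≤ c := by
  rw [norm_mul, norm_real, Real.norm_of_nonneg hc, norm_pow]
  exact mul_le_of_le_one_right hc (pow_le_one₀ (norm_nonneg z) hz)

lemma norm_tsum_ofReal_mul_pow_le (ha : ∀ n, 0 ≤ a n) (hs : HasSum a s) (hz : ‖z‖ ≤ 1) :
    ‖∑' n, (a n : ℂ) * z ^ n‖ ≤ s :=
  tsum_of_norm_bounded hs fun n => norm_ofReal_mul_pow_le (ha n) hz n

lemma eq_one_of_norm_tsum_ofReal_mul_pow_eq (ha : ∀ n, 0 ≤ a n) (hs : HasSum a s)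
    (ha₀ : 0 < a 0) (ha₁ : 0 < a 1) (hz : ‖z‖ ≤ 1) (h : ‖∑' n, (a n : ℂ) * z ^ n‖ = s) :
    z = 1 := by
  set S := ∑' n, (a n : ℂ) * z ^ n
  have hs_pos : 0 < s := hs.tsum_eq ▸ hs.summable.tsum_pos ha 0 ha₀
  have hS : HasSum (fun n => (a n : ℂ) * z ^ n) S :=
    (Summable.of_norm_bounded hs.summable fun n => norm_ofReal_mul_pow_le (ha n) hz n).hasSum
  -- rotate the sum onto the positive real axis
  set u : ℂ := conj S / s
  have hu : ‖u‖ = 1 := by simp [u, h, hs_pos.ne', abs_of_pos hs_pos]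
  have hw : ∀ n, ‖u * z ^ n‖ ≤ 1 := fun n => by
    rw [norm_mul, hu, one_mul, norm_pow]
    exact pow_le_one₀ (norm_nonneg z) hz
  have hle : ∀ n, a n * (u * z ^ n).re ≤ a n := fun n =>
    mul_le_of_le_one_right (ha n) ((re_le_norm _).trans (hw n))
  have hre : HasSum (fun n => a n * (u * z ^ n).re) s := by
    have huS : (u * S).re = s := by
      simp only [u, div_mul_eq_mul_div, conj_mul', h]
      norm_cast
      field_simp
    rw [← huS]
    refine (reCLM.hasSum (hS.mul_left u)).congr_fun fun n => ?_
    simp [mul_left_comm u]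
  have heq : ∀ n, a n * (u * z ^ n).re = a n := fun n =>
    (hle n).eq_of_not_lt fun hlt => (hasSum_lt hle hlt hre hs).false
  have hone : ∀ n, 0 < a n → u * z ^ n = 1 := fun n hn =>
    eq_one_of_norm_le_one_of_re_eq_one (hw n) (by simpa [hn.ne'] using heq n)
  have hu_one : u = 1 := by simpa using hone 0 ha₀
  simpa [hu_one] using hone 1 ha₁

end Complex

/-- Maclaurin coefficients of `y ↦ 1 / (1 + √(1 - y)) = (1 - √(1 - y)) / y`. -/
noncomputable def invOneAddSqrtCoeff (n : ℕ) : ℝ := ((2 * n - 1)‼ : ℝ) / (2 ^ (n + 1) * (n + 1)!)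

lemma invOneAddSqrtCoeff_nonneg (n : ℕ) : 0 ≤ invOneAddSqrtCoeff n := by
  unfold invOneAddSqrtCoeff
  positivity

lemma invOneAddSqrtCoeff_succ (n : ℕ) :
    invOneAddSqrtCoeff (n + 1) = invOneAddSqrtCoeff n * (2 * n + 1) / (2 * (n + 2)) := by
  rw [invOneAddSqrtCoeff, invOneAddSqrtCoeff, show 2 * (n + 1) - 1 = 2 * n + 1 by omega,
    Nat.doubleFactorial_add_one, Nat.factorial_succ (n + 1)]
  push_cast
  field_simp
  ring

lemma invOneAddSqrtCoeff_eq_choose (n : ℕ) :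
    invOneAddSqrtCoeff n = (-1) ^ n * Ring.choose (1 / 2 : ℝ) (n + 1) := by
  induction n with
  | zero => simp [invOneAddSqrtCoeff]
  | succ n ih =>
    have hrec := Ring.choose_add_one_mul (1 / 2 : ℝ) (n + 1)
    rw [invOneAddSqrtCoeff_succ, ih]
    push_cast at hrec
    field_simp
    linear_combination (-1) ^ n * 2 * hrec

lemma hasSum_invOneAddSqrtCoeff_mul_pow {y : ℝ} (hy : |y| < 1) :
    HasSum (fun n => invOneAddSqrtCoeff n * y ^ n) (1 / (1 + √(1 - y))) := by
  rcases eq_or_ne y 0 with rfl | hy0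
  · convert hasSum_ite_eq 0 (1 / 2 : ℝ) using 1
    · ext n
      cases n <;> simp [invOneAddSqrtCoeff]
    · norm_num
  have hmem : -y ∈ Metric.eball (0 : ℝ) 1 := by
    rw [Metric.mem_eball, edist_zero_right, enorm_neg, ← ofReal_norm]
    simpa using hy
  have hbinom := (one_add_rpow_hasFPowerSeriesOnBall_zero (a := 1 / 2)).hasSum hmem
  simp only [binomialSeries, FormalMultilinearSeries.ofScalars_apply_eq, smul_eq_mul, zero_sub,
    ← sub_eq_add_neg, ← sqrt_eq_rpow] at hbinom
  have hsq : √(1 - y) ^ 2 = 1 - y := sq_sqrt (by linarith [le_abs_self y])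
  have hval : -(√(1 - y) - ∑ i ∈ Finset.range 1, Ring.choose (1 / 2 : ℝ) i * (-y) ^ i) / y =
      1 / (1 + √(1 - y)) := by
    rw [Finset.sum_range_one, div_eq_div_iff hy0 (by positivity)]
    norm_num
    linear_combination -hsq
  rw [← hval]
  refine ((hasSum_nat_add_iff' 1).mpr hbinom).neg.div_const y |>.congr_fun fun n => ?_
  rw [invOneAddSqrtCoeff_eq_choose]
  field_simp
  ring

lemma hasDerivAt_arcsin_sub_div_one_add_sqrt {x : ℝ} (hx₁ : -1 < x) (hx₂ : x < 1) :
    HasDerivAt (fun t => arcsin t - t / (1 + √(1 - t ^ 2))) (1 / (1 + √(1 - x ^ 2))) x := by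
  have hpos : 0 < 1 - x ^ 2 := by nlinarith
  have hsq : √(1 - x ^ 2) ^ 2 = 1 - x ^ 2 := sq_sqrt hpos.le
  have hsqrt : HasDerivAt (fun t => 1 + √(1 - t ^ 2)) (-(2 * x) / (2 * √(1 - x ^ 2))) x := by
    simpa using (((hasDerivAt_pow 2 x).const_sub 1).sqrt hpos.ne').const_add 1
  refine ((hasDerivAt_arcsin hx₁.ne' hx₂.ne).sub
    ((hasDerivAt_id x).div hsqrt (by positivity))).congr_deriv ?_
  simp only [id]
  field_simp
  linear_combination -hsq

lemma continuous_one_div_one_add_sqrt_one_sub_sq :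
    Continuous fun t : ℝ => 1 / (1 + √(1 - t ^ 2)) :=
  continuous_const.div (by fun_prop) fun t => by positivity

lemma integral_one_div_one_add_sqrt_one_sub_sq :
    ∫ t in (0 : ℝ)..1, 1 / (1 + √(1 - t ^ 2)) = π / 2 - 1 := by
  have hcont : ContinuousOn (fun t => arcsin t - t / (1 + √(1 - t ^ 2))) (Set.Icc 0 1) :=
    continuous_arcsin.continuousOn.sub
      (continuousOn_id.div (by fun_prop) fun t _ => by positivity)
  rw [intervalIntegral.integral_eq_sub_of_hasDeriv_right_of_le zero_le_one hcont
    (fun x hx =>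
      (hasDerivAt_arcsin_sub_div_one_add_sqrt (by linarith [hx.1]) hx.2).hasDerivWithinAt)
    (continuous_one_div_one_add_sqrt_one_sub_sq.intervalIntegrable 0 1)]
  norm_num

open MeasureTheory in
lemma hasSum_invOneAddSqrtCoeff_div :
    HasSum (fun n => invOneAddSqrtCoeff n / (2 * n + 1)) (π / 2 - 1) := by
  set F : ℕ → ℝ → ℝ := fun n t => invOneAddSqrtCoeff n * t ^ (2 * n)
  have hF : ∀ t ∈ Set.Ioo (0 : ℝ) 1, HasSum (F · t) (1 / (1 + √(1 - t ^ 2))) := fun t ht => by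
    have : |t ^ 2| < 1 := by
      rw [abs_of_nonneg (by positivity)]
      nlinarith [ht.1, ht.2]
    simpa only [F, pow_mul] using hasSum_invOneAddSqrtCoeff_mul_pow this
  have hF_nonneg : ∀ n t, 0 ≤ F n t := fun n t =>
    mul_nonneg (invOneAddSqrtCoeff_nonneg n) (by rw [pow_mul]; positivity)
  have hbound : IntegrableOn (fun t => ∑' n, F n t) (Set.Ioo 0 1) :=
    (continuous_one_div_one_add_sqrt_one_sub_sq.integrableOn_Icc.mono_set
      Set.Ioo_subset_Icc_self).congr_fun (fun t ht => (hF t ht).tsum_eq.symm) measurableSet_Ioo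
  have hint := hasSum_integral_of_dominated_convergence F (fun n => by fun_prop)
    (fun n => ae_of_all _ fun t => (Real.norm_of_nonneg (hF_nonneg n t)).le)
    (ae_restrict_of_forall_mem measurableSet_Ioo fun t ht => (hF t ht).summable)
    hbound (ae_restrict_of_forall_mem measurableSet_Ioo hF)
  simp only [← integral_Ioc_eq_integral_Ioo, ← intervalIntegral.integral_of_le zero_le_one,
    integral_one_div_one_add_sqrt_one_sub_sq] at hint
  refine hint.congr_fun fun n => ?_
  rw [intervalIntegral.integral_const_mul, integral_pow]
  push_cast
  ring

lemma k1Coeff_zero : k1Coeff 0 = 1 / π := by simp [k1Coeff]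

lemma k1Coeff_one : k1Coeff 1 = 1 / 2 := by simp [k1Coeff]

lemma k1Coeff_two_mul_add_two (k : ℕ) :
    k1Coeff (2 * k + 2) = invOneAddSqrtCoeff k / (2 * k + 1) / π := by
  have hpar : (2 * k + 2) % 2 = 0 := by omega
  simp only [k1Coeff, invOneAddSqrtCoeff, hpar, show 2 * k + 2 - 3 = 2 * k - 1 by omega,
    show (2 * k + 2) / 2 = k + 1 by omega, if_true, add_eq_zero, two_ne_zero, and_false,
    if_false, show 2 * k + 2 ≠ 1 by omega]
  rw [show ((2 * k + 2 : ℕ) : ℝ) - 1 = 2 * k + 1 by push_cast; ring]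
  field_simp

lemma k1Coeff_two_mul_add_three (k : ℕ) : k1Coeff (2 * k + 3) = 0 := by
  simp [k1Coeff, show (2 * k + 3) % 2 = 1 by omega]

lemma k1Coeff_nonneg (m : ℕ) : 0 ≤ k1Coeff m := by
  obtain ⟨k, rfl | rfl⟩ := Nat.even_or_odd' m <;> rcases k with _ | k
  · rw [k1Coeff_zero]
    positivity
  · rw [mul_add_one, k1Coeff_two_mul_add_two]
    have := invOneAddSqrtCoeff_nonneg k
    positivity
  · rw [k1Coeff_one]
    positivity
  · rw [show 2 * (k + 1) + 1 = 2 * k + 3 by ring, k1Coeff_two_mul_add_three]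

lemma hasSum_k1Coeff : HasSum k1Coeff 1 := by
  have hEven : HasSum (fun k => k1Coeff (2 * k)) ((π / 2 - 1) / π + 1 / π) := by
    refine (hasSum_nat_add_iff' 1).mp ?_
    simpa [mul_add_one, k1Coeff_two_mul_add_two, k1Coeff_zero]
      using hasSum_invOneAddSqrtCoeff_div.div_const π
  have hOdd : HasSum (fun k => k1Coeff (2 * k + 1)) (1 / 2) := by
    convert hasSum_single 0 fun k (hk : k ≠ 0) => ?_ using 1
    · simp [k1Coeff_one]
    · obtain ⟨j, rfl⟩ := Nat.exists_eq_succ_of_ne_zero hk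
      exact k1Coeff_two_mul_add_three j
  convert hEven.even_add_odd hOdd using 1
  field_simp
  ring

theorem k1_le_one_on_closed_disk (z : ℂ) (hz : ‖z‖ ≤ 1) :
    ‖k1Series z‖ ≤ 1 ∧ (‖k1Series z‖ = 1 ↔ z = 1) := by
  refine ⟨norm_tsum_ofReal_mul_pow_le k1Coeff_nonneg hasSum_k1Coeff hz,
    eq_one_of_norm_tsum_ofReal_mul_pow_eq k1Coeff_nonneg hasSum_k1Coeff
      (by rw [k1Coeff_zero]; positivity) (by rw [k1Coeff_one]; norm_num) hz, ?_⟩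
  rintro rfl
  simp [k1Series, ← ofReal_tsum, hasSum_k1Coeff.tsum_eq]
end

section
/- For a = p/q ∈ (0,1) with p, q coprime positive integers, the function f(t) = (1/π) Σ_{k=0}^∞ (−1)^{k+1} Γ(ak+1) sin(πak)/(k! t^{ak+1}) satisfies f(t) ~ −1/(t^{a+1} Γ(−a)) as t → +∞; note −1/Γ(−a) > 0, so f is eventually positive. -/
open Real Filter

/-- The series representation of the inverse Laplace transform of `exp(−s^a)`. -/
noncomputable def invLaplaceSeries (a : ℝ) (t : ℝ) : ℝ :=
  (1 / Real.pi) * ∑' k : ℕ,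
    (-1 : ℝ) ^ (k + 1) * Real.Gamma (a * k + 1) * Real.sin (Real.pi * a * k) /
      ((Nat.factorial k : ℝ) * t ^ (a * k + 1))

/-!
The `k = 0` term vanishes and, by the reflection formula, the `k = 1` term is exactly
`-1 / (t ^ (a + 1) Γ(-a))`. For `0 ≤ a ≤ 1`, convexity of `Γ` gives `Γ(a k + 1) ≤ k!`, so the
`k`-th term is at most `t⁻¹ (t ^ (-a)) ^ k` in absolute value; the terms with `k ≥ 2` therefore
sum to `O(t ^ (-1 - 2a))`, which is `o(t ^ (-1 - a))` as `t → ∞`.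
-/

noncomputable def invLaplaceTerm (a t : ℝ) (k : ℕ) : ℝ :=
  (-1 : ℝ) ^ (k + 1) * Gamma (a * k + 1) * sin (π * a * k) / (k.factorial * t ^ (a * k + 1))

theorem invLaplaceSeries_eq_tsum (a t : ℝ) :
    invLaplaceSeries a t = 1 / π * ∑' k, invLaplaceTerm a t k :=
  rfl

theorem invLaplaceTerm_zero (a t : ℝ) : invLaplaceTerm a t 0 = 0 := by
  simp [invLaplaceTerm]

theorem invLaplaceTerm_one (a t : ℝ) :
    invLaplaceTerm a t 1 = Gamma (a + 1) * sin (π * a) / t ^ (a + 1) := by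
  simp [invLaplaceTerm]

theorem Real.Gamma_neg_mul_Gamma_add_one (a : ℝ) :
    Gamma (-a) * Gamma (a + 1) = -(π / sin (π * a)) := by
  rw [← div_neg, ← sin_neg, ← mul_neg, ← Gamma_mul_Gamma_one_sub, sub_neg_eq_add, add_comm]

theorem neg_one_div_Gamma_neg {a : ℝ} (h : sin (π * a) ≠ 0) :
    -1 / Gamma (-a) = Gamma (a + 1) * sin (π * a) / π := by
  have hprod := Gamma_neg_mul_Gamma_add_one a
  have hne : Gamma (-a) * Gamma (a + 1) ≠ 0 := by
    rw [hprod]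
    exact neg_ne_zero.2 (div_ne_zero pi_ne_zero h)
  rw [div_eq_div_iff (left_ne_zero_of_mul hne) pi_ne_zero,
    show Gamma (a + 1) * sin (π * a) * Gamma (-a) = Gamma (-a) * Gamma (a + 1) * sin (π * a) by
      ring, hprod]
  field_simp

theorem sin_pi_mul_pos {a : ℝ} (ha₀ : 0 < a) (ha₁ : a < 1) : 0 < sin (π * a) :=
  sin_pos_of_pos_of_lt_pi (by positivity) (by nlinarith [pi_pos])

theorem neg_one_div_Gamma_neg_pos {a : ℝ} (ha₀ : 0 < a) (ha₁ : a < 1) :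
    0 < -1 / Gamma (-a) := by
  rw [neg_one_div_Gamma_neg (sin_pi_mul_pos ha₀ ha₁).ne']
  exact div_pos (mul_pos (Gamma_pos_of_pos (by linarith)) (sin_pi_mul_pos ha₀ ha₁)) pi_pos

theorem Real.Gamma_mul_natCast_add_one_le_factorial {a : ℝ} (ha₀ : 0 ≤ a) (ha₁ : a ≤ 1)
    (k : ℕ) : Gamma (a * k + 1) ≤ k.factorial := by
  -- convexity of `Γ` on `[1, k + 1]` at `a * k + 1 = (1 - a) • 1 + a • (k + 1)`
  have hconv := convexOn_Gamma.2 (Set.mem_Ioi.2 one_pos) (Set.mem_Ioi.2 k.cast_add_one_pos)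
    (sub_nonneg.2 ha₁) ha₀ (sub_add_cancel 1 a)
  simp only [smul_eq_mul] at hconv
  rw [Gamma_one, Gamma_nat_eq_factorial, show (1 - a) * 1 + a * (k + 1) = a * k + 1 by ring]
    at hconv
  have : (1 : ℝ) ≤ k.factorial := mod_cast k.factorial_pos
  nlinarith

theorem inv_rpow_mul_natCast_add_one {t : ℝ} (ht : 0 < t) (a : ℝ) (k : ℕ) :
    (t ^ (a * k + 1))⁻¹ = t⁻¹ * (t ^ (-a)) ^ k := by
  rw [← rpow_neg ht.le, ← rpow_natCast, ← rpow_mul ht.le, ← rpow_neg_one, ← rpow_add ht]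
  ring_nf

theorem abs_invLaplaceTerm_le {a t : ℝ} (ha₀ : 0 ≤ a) (ha₁ : a ≤ 1) (ht : 0 < t) (k : ℕ) :
    |invLaplaceTerm a t k| ≤ t⁻¹ * (t ^ (-a)) ^ k := by
  have hfact : (0 : ℝ) < k.factorial := mod_cast k.factorial_pos
  have hΓ : 0 < Gamma (a * k + 1) := Gamma_pos_of_pos (by positivity)
  have hnum : |(-1 : ℝ) ^ (k + 1) * Gamma (a * k + 1) * sin (π * a * k)| ≤ k.factorial := by
    rw [abs_mul, abs_mul, abs_pow, abs_neg, abs_one, one_pow, one_mul, abs_of_pos hΓ]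
    calc Gamma (a * k + 1) * |sin (π * a * k)| ≤ Gamma (a * k + 1) * 1 := by
          gcongr
          exact abs_sin_le_one _
      _ ≤ k.factorial := by
          rw [mul_one]
          exact Gamma_mul_natCast_add_one_le_factorial ha₀ ha₁ k
  have hden : 0 < (k.factorial : ℝ) * t ^ (a * k + 1) := by positivity
  calc |invLaplaceTerm a t k| ≤ k.factorial / (k.factorial * t ^ (a * k + 1)) := by
        rw [invLaplaceTerm, abs_div, abs_of_pos hden]
        exact div_le_div_of_nonneg_right hnum hden.le
    _ = t⁻¹ * (t ^ (-a)) ^ k := by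
        rw [div_mul_cancel_left₀ hfact.ne', inv_rpow_mul_natCast_add_one ht]

theorem summable_invLaplaceTerm {a t : ℝ} (ha₀ : 0 < a) (ha₁ : a ≤ 1) (ht : 1 < t) :
    Summable (invLaplaceTerm a t) :=
  Summable.of_norm_bounded ((summable_geometric_of_lt_one (by positivity)
    (rpow_lt_one_of_one_lt_of_neg ht (neg_neg_of_pos ha₀))).mul_left t⁻¹)
    (abs_invLaplaceTerm_le ha₀.le ha₁ (zero_lt_one.trans ht))

theorem abs_tsum_invLaplaceTerm_add_two_le {a t : ℝ} (ha₀ : 0 < a) (ha₁ : a ≤ 1) (ht : 1 < t) :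
    |∑' k, invLaplaceTerm a t (k + 2)| ≤ t⁻¹ * (t ^ (-a)) ^ 2 * (1 - t ^ (-a))⁻¹ := by
  rw [← norm_eq_abs]
  refine tsum_of_norm_bounded ((hasSum_geometric_of_lt_one (by positivity)
    (rpow_lt_one_of_one_lt_of_neg ht (neg_neg_of_pos ha₀))).mul_left (t⁻¹ * (t ^ (-a)) ^ 2))
    fun k => ?_
  calc ‖invLaplaceTerm a t (k + 2)‖ ≤ t⁻¹ * (t ^ (-a)) ^ (k + 2) :=
        abs_invLaplaceTerm_le ha₀.le ha₁ (zero_lt_one.trans ht) (k + 2)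
    _ = t⁻¹ * (t ^ (-a)) ^ 2 * (t ^ (-a)) ^ k := by ring

theorem tendsto_tsum_invLaplaceTerm_add_two_mul_rpow {a : ℝ} (ha₀ : 0 < a) (ha₁ : a ≤ 1) :
    Tendsto (fun t => (∑' k, invLaplaceTerm a t (k + 2)) * t ^ (a + 1)) atTop (nhds 0) := by
  have hbound : Tendsto (fun t : ℝ => t ^ (-a) * (1 - t ^ (-a))⁻¹) atTop (nhds 0) := by
    simpa using (tendsto_rpow_neg_atTop ha₀).mul
      (((tendsto_rpow_neg_atTop ha₀).const_sub 1).inv₀ (by norm_num))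
  refine squeeze_zero_norm' ?_ hbound
  filter_upwards [eventually_gt_atTop 1] with t ht
  have ht₀ : 0 < t := zero_lt_one.trans ht
  have hcancel : t⁻¹ * (t ^ (-a)) ^ 2 * t ^ (a + 1) = t ^ (-a) := by
    rw [← rpow_natCast, ← rpow_mul ht₀.le, ← rpow_neg_one, ← rpow_add ht₀, ← rpow_add ht₀]
    ring_nf
  calc ‖(∑' k, invLaplaceTerm a t (k + 2)) * t ^ (a + 1)‖
      = |∑' k, invLaplaceTerm a t (k + 2)| * t ^ (a + 1) := by
        rw [norm_mul, norm_of_nonneg (rpow_pos_of_pos ht₀ _).le, norm_eq_abs]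
    _ ≤ t⁻¹ * (t ^ (-a)) ^ 2 * (1 - t ^ (-a))⁻¹ * t ^ (a + 1) := by
        gcongr
        exact abs_tsum_invLaplaceTerm_add_two_le ha₀ ha₁ ht
    _ = t ^ (-a) * (1 - t ^ (-a))⁻¹ := by rw [mul_right_comm, hcancel]

theorem invLaplaceSeries_eq_leading_add_tail {a t : ℝ} (ha₀ : 0 < a) (ha₁ : a < 1) (ht : 1 < t) :
    invLaplaceSeries a t =
      -1 / (t ^ (a + 1) * Gamma (-a)) + 1 / π * ∑' k, invLaplaceTerm a t (k + 2) := by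
  rw [invLaplaceSeries_eq_tsum, ← (summable_invLaplaceTerm ha₀ ha₁.le ht).sum_add_tsum_nat_add 2,
    Finset.sum_range_succ, Finset.sum_range_one, invLaplaceTerm_zero, invLaplaceTerm_one,
    div_mul_eq_div_div_swap, neg_one_div_Gamma_neg (sin_pi_mul_pos ha₀ ha₁).ne']
  ring

theorem tendsto_invLaplaceSeries_div_leading {a : ℝ} (ha₀ : 0 < a) (ha₁ : a < 1) :
    Tendsto (fun t => invLaplaceSeries a t / (-1 / (t ^ (a + 1) * Gamma (-a)))) atTop
      (nhds 1) := by
  have hc := neg_one_div_Gamma_neg_pos ha₀ ha₁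
  have hΓ : Gamma (-a) ≠ 0 := fun h => by simp [h] at hc
  have hlim := ((tendsto_tsum_invLaplaceTerm_add_two_mul_rpow ha₀ ha₁.le).const_mul
    (1 / π / (-1 / Gamma (-a)))).const_add 1
  rw [mul_zero, add_zero] at hlim
  refine hlim.congr' ?_
  filter_upwards [eventually_gt_atTop 1] with t ht
  have hT : 0 < t ^ (a + 1) := rpow_pos_of_pos (zero_lt_one.trans ht) _
  rw [invLaplaceSeries_eq_leading_add_tail ha₀ ha₁ ht, div_mul_eq_div_div_swap]
  field_simp
  ring

theorem eventually_invLaplaceSeries_pos {a : ℝ} (ha₀ : 0 < a) (ha₁ : a < 1) :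
    ∀ᶠ t in atTop, 0 < invLaplaceSeries a t := by
  filter_upwards [(tendsto_invLaplaceSeries_div_leading ha₀ ha₁).eventually
    (eventually_gt_nhds one_pos), eventually_gt_atTop 0] with t hratio ht
  refine (div_pos_iff_of_pos_right ?_).1 hratio
  rw [div_mul_eq_div_div_swap]
  exact div_pos (neg_one_div_Gamma_neg_pos ha₀ ha₁) (rpow_pos_of_pos ht _)

theorem inv_laplace_tail_asymptotics_general (p q : ℕ) (hp : 0 < p) (hpq : p < q) :
    (0 : ℝ) < -1 / Real.Gamma (-((p : ℝ) / q)) ∧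
    Tendsto (fun t : ℝ =>
        invLaplaceSeries ((p : ℝ) / q) t /
          (-1 / (t ^ ((p : ℝ) / q + 1) * Real.Gamma (-((p : ℝ) / q)))))
      atTop (nhds 1) ∧
    (∀ᶠ t : ℝ in atTop, 0 < invLaplaceSeries ((p : ℝ) / q) t) := by
  have hq : (0 : ℝ) < q := mod_cast hp.trans hpq
  have ha₀ : 0 < (p : ℝ) / q := div_pos (mod_cast hp) hq
  have ha₁ : (p : ℝ) / q < 1 := (div_lt_one hq).2 (mod_cast hpq)
  exact ⟨neg_one_div_Gamma_neg_pos ha₀ ha₁, tendsto_invLaplaceSeries_div_leading ha₀ ha₁,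
    eventually_invLaplaceSeries_pos ha₀ ha₁⟩

theorem inv_laplace_tail_asymptotics (p q : ℕ) (hp : 0 < p) (hpq : p < q)
    (hcop : Nat.Coprime p q) :
    (0 : ℝ) < -1 / Real.Gamma (-((p : ℝ) / q)) ∧
    Tendsto (fun t : ℝ =>
        invLaplaceSeries ((p : ℝ) / q) t /
          (-1 / (t ^ ((p : ℝ) / q + 1) * Real.Gamma (-((p : ℝ) / q)))))
      atTop (nhds 1) ∧
    (∀ᶠ t : ℝ in atTop, 0 < invLaplaceSeries ((p : ℝ) / q) t) :=
  inv_laplace_tail_asymptotics_general p q hp hpq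
end
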